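/- Let X_{t+1} = (U_t + ΔU)(V_t + ΔV)ᵀ and suppose 𝒜 satisfies the r-RIP with constant δ_r and the 2r-RIP with constant δ_{2r}, both less than 1. Then ‖𝒜(U_t V_tᵀ + U_t ΔVᵀ + ΔU V_tᵀ − X*)‖ ≥ √(1−δ_{2r}) ‖X_{t+1} − X*‖_F − (√(1+δ_r)/2)(‖ΔU‖_F² + ‖ΔV‖_F²), for any rank-r matrix X* ∈ ℝ^{n₁×n₂}. -/
import Mathlib


open Matrix

/-- Frobenius norm of a real matrix. -/
noncomputable def frob {m n : Type*} [Fintype m] [Fintype n] (A : Matrix m n ℝ) : ℝ :=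
  Real.sqrt (∑ i, ∑ j, (A i j) ^ 2)

/-- Largest singular value (ℓ²-operator norm) of a real matrix. -/
noncomputable def sigmaMax {m n : Type*} [Fintype m] [Fintype n] (A : Matrix m n ℝ) : ℝ :=
  sSup {c | ∃ x : n → ℝ, Real.sqrt (∑ j, (x j) ^ 2) = 1 ∧
    c = Real.sqrt (∑ i, (A.mulVec x i) ^ 2)}

/-- Smallest singular value of a real matrix (minimum of ‖Ax‖ over unit vectors x). -/
noncomputable def sigmaMin {m n : Type*} [Fintype m] [Fintype n] (A : Matrix m n ℝ) : ℝ :=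
  sInf {c | ∃ x : n → ℝ, Real.sqrt (∑ j, (x j) ^ 2) = 1 ∧
    c = Real.sqrt (∑ i, (A.mulVec x i) ^ 2)}

/-- The k-th largest singular value of a real matrix (Courant–Fischer max-min). -/
noncomputable def sigmaI {m n : Type*} [Fintype m] [Fintype n] (A : Matrix m n ℝ) (k : ℕ) : ℝ :=
  sSup {c | ∃ S : Submodule ℝ (n → ℝ), Module.finrank ℝ S = k ∧
    c = sInf {d | ∃ x ∈ S, Real.sqrt (∑ j, (x j) ^ 2) = 1 ∧
      d = Real.sqrt (∑ i, (A.mulVec x i) ^ 2)}}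

/-- Procrustes distance: infimum of ‖Z₁ − Z₂ P‖_F over orthogonal P. -/
noncomputable def dP {N r : Type*} [Fintype N] [Fintype r] [DecidableEq r]
    (Z₁ Z₂ : Matrix N r ℝ) : ℝ :=
  sInf {c | ∃ P : Matrix r r ℝ, Pᵀ * P = 1 ∧ c = frob (Z₁ - Z₂ * P)}

/-- Maximum Euclidean row norm ‖A‖_{2,∞}. -/
noncomputable def rowNorm {m n : Type*} [Fintype m] [Fintype n] (A : Matrix m n ℝ) : ℝ :=
  ⨆ i, Real.sqrt (∑ j, (A i j) ^ 2)

lemma frob_nonneg {m n : Type*} [Fintype m] [Fintype n] (A : Matrix m n ℝ) : 0 ≤ frob A :=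
  Real.sqrt_nonneg _

lemma frob_sq {m n : Type*} [Fintype m] [Fintype n] (A : Matrix m n ℝ) :
    frob A ^ 2 = ∑ i, ∑ j, (A i j) ^ 2 := by
  rw [frob, Real.sq_sqrt]
  positivity

lemma rank_sub_le {m n : ℕ} (A B : Matrix (Fin m) (Fin n) ℝ) :
    (A - B).rank ≤ A.rank + B.rank := by
  rw [Matrix.rank, Matrix.rank, Matrix.rank]
  have h : (A - B).mulVecLin = A.mulVecLin - B.mulVecLin := by
    ext x i; simp [Matrix.sub_mulVec]
  rw [h]
  have hle : LinearMap.range (A.mulVecLin - B.mulVecLin) ≤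
      LinearMap.range A.mulVecLin ⊔ LinearMap.range B.mulVecLin := by
    rintro _ ⟨x, rfl⟩
    exact Submodule.sub_mem _
      (Submodule.mem_sup_left (LinearMap.mem_range_self _ x))
      (Submodule.mem_sup_right (LinearMap.mem_range_self _ x))
  exact (Submodule.finrank_mono hle).trans
    (Submodule.finrank_add_le_finrank_add_finrank _ _)

lemma frob_mul_transpose_le {n₁ n₂ r : ℕ} (P : Matrix (Fin n₁) (Fin r) ℝ)
    (Q : Matrix (Fin n₂) (Fin r) ℝ) : frob (P * Qᵀ) ≤ frob P * frob Q := by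
  have h : ∑ i, ∑ j, ((P * Qᵀ) i j) ^ 2 ≤
      (∑ i, ∑ k, (P i k) ^ 2) * (∑ j, ∑ k, (Q j k) ^ 2) := by
    rw [Finset.sum_mul_sum]
    apply Finset.sum_le_sum; intro i _
    apply Finset.sum_le_sum; intro j _
    have := Finset.sum_mul_sq_le_sq_mul_sq Finset.univ (fun k => P i k) (fun k => Q j k)
    simpa [Matrix.mul_apply, Matrix.transpose_apply] using this
  calc frob (P * Qᵀ) ≤ Real.sqrt ((∑ i, ∑ k, (P i k) ^ 2) * (∑ j, ∑ k, (Q j k) ^ 2)) :=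
        Real.sqrt_le_sqrt h
    _ = frob P * frob Q := by
        rw [Real.sqrt_mul (by positivity)]; rfl

theorem objective_lower_bound (n₁ n₂ r m : ℕ) (δr δ2r : ℝ)
    (hδr : δr < 1) (hδ2r : δ2r < 1)
    (A : Matrix (Fin n₁) (Fin n₂) ℝ →ₗ[ℝ] EuclideanSpace ℝ (Fin m))
    (hRIPr : ∀ X : Matrix (Fin n₁) (Fin n₂) ℝ, X.rank ≤ r →
      (1 - δr) * frob X ^ 2 ≤ ‖A X‖ ^ 2 ∧ ‖A X‖ ^ 2 ≤ (1 + δr) * frob X ^ 2)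
    (hRIP2r : ∀ X : Matrix (Fin n₁) (Fin n₂) ℝ, X.rank ≤ 2 * r →
      (1 - δ2r) * frob X ^ 2 ≤ ‖A X‖ ^ 2 ∧ ‖A X‖ ^ 2 ≤ (1 + δ2r) * frob X ^ 2)
    (Xstar : Matrix (Fin n₁) (Fin n₂) ℝ) (hrank : Xstar.rank = r)
    (Ut ΔU : Matrix (Fin n₁) (Fin r) ℝ) (Vt ΔV : Matrix (Fin n₂) (Fin r) ℝ) :
    Real.sqrt (1 - δ2r) * frob ((Ut + ΔU) * (Vt + ΔV)ᵀ - Xstar) -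
        Real.sqrt (1 + δr) / 2 * (frob ΔU ^ 2 + frob ΔV ^ 2)
      ≤ ‖A (Ut * Vtᵀ + Ut * ΔVᵀ + ΔU * Vtᵀ - Xstar)‖ := by
  set Y : Matrix (Fin n₁) (Fin n₂) ℝ := (Ut + ΔU) * (Vt + ΔV)ᵀ - Xstar with hY
  set Z : Matrix (Fin n₁) (Fin n₂) ℝ := ΔU * ΔVᵀ with hZ
  have hid : Ut * Vtᵀ + Ut * ΔVᵀ + ΔU * Vtᵀ - Xstar = Y - Z := by
    rw [hY, hZ]
    simp only [Matrix.transpose_add, Matrix.add_mul, Matrix.mul_add]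
    abel
  -- rank bounds
  have hrankY : Y.rank ≤ 2 * r := by
    have h1 : ((Ut + ΔU) * (Vt + ΔV)ᵀ).rank ≤ r :=
      (Matrix.rank_mul_le_left _ _).trans ((Matrix.rank_le_card_width _).trans (by simp))
    calc Y.rank ≤ ((Ut + ΔU) * (Vt + ΔV)ᵀ).rank + Xstar.rank := rank_sub_le _ _
      _ ≤ r + r := by omega
      _ = 2 * r := by omega
  have hrankZ : Z.rank ≤ r :=
    (Matrix.rank_mul_le_left _ _).trans ((Matrix.rank_le_card_width _).trans (by simp))
  -- lower RIP on Y
  have hlow : Real.sqrt (1 - δ2r) * frob Y ≤ ‖A Y‖ := by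
    have h := (hRIP2r Y hrankY).1
    have := Real.sqrt_le_sqrt h
    rwa [Real.sqrt_mul' _ (sq_nonneg (frob Y)), Real.sqrt_sq (frob_nonneg Y),
      Real.sqrt_sq (norm_nonneg _)] at this
  -- upper RIP on Z
  have hup : ‖A Z‖ ≤ Real.sqrt (1 + δr) * frob Z := by
    have h := (hRIPr Z hrankZ).2
    have := Real.sqrt_le_sqrt h
    rwa [Real.sqrt_mul' _ (sq_nonneg (frob Z)), Real.sqrt_sq (frob_nonneg Z),
      Real.sqrt_sq (norm_nonneg _)] at this
  have hZfr : frob Z ≤ (frob ΔU ^ 2 + frob ΔV ^ 2) / 2 := by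
    have h1 := frob_mul_transpose_le ΔU ΔV
    nlinarith [sq_nonneg (frob ΔU - frob ΔV)]
  have htri : ‖A Y‖ - ‖A Z‖ ≤ ‖A (Y - Z)‖ := by
    have : A (Y - Z) = A Y - A Z := map_sub _ _ _
    rw [this]
    exact norm_sub_norm_le _ _
  have hsq : (0:ℝ) ≤ Real.sqrt (1 + δr) := Real.sqrt_nonneg _
  rw [hid]
  have : Real.sqrt (1 + δr) * frob Z ≤ Real.sqrt (1 + δr) / 2 * (frob ΔU ^ 2 + frob ΔV ^ 2) := by
    rw [div_mul_eq_mul_div, mul_div_assoc]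
    exact mul_le_mul_of_nonneg_left hZfr hsq
  linarith
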